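/- Let u : ℝⁿ × [0,T) → ℝ be continuous, smooth on ℝⁿ × (0,T), and a solution of the graphical mean curvature flow on ℝⁿ × (0,T), with u(·,0) = u₀. If u₀(x) ≥ C for all x ∈ ℝⁿ and some constant C ∈ ℝ, then u(x,t) ≥ C for all (x,t) ∈ ℝⁿ × (0,T). -/

import Mathlib

open Real Filter Set

noncomputable section

/-- The `i`-th spatial partial derivative of `f : ℝⁿ → ℝ`. -/
def pd (n : ℕ) (f : EuclideanSpace ℝ (Fin n) → ℝ) (i : Fin n)
    (x : EuclideanSpace ℝ (Fin n)) : ℝ :=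
  fderiv ℝ f x (EuclideanSpace.single i 1)

/-- The second spatial partial derivative `∂ᵢ∂ⱼ f`. -/
def pd2 (n : ℕ) (f : EuclideanSpace ℝ (Fin n) → ℝ) (i j : Fin n)
    (x : EuclideanSpace ℝ (Fin n)) : ℝ :=
  pd n (fun y => pd n f j y) i x

/-- The squared norm `|Df|²` of the spatial gradient. -/
def gradSq (n : ℕ) (f : EuclideanSpace ℝ (Fin n) → ℝ)
    (x : EuclideanSpace ℝ (Fin n)) : ℝ :=
  ∑ i, (pd n f i x) ^ 2

/-- The right-hand side of the graphical mean curvature flow equation: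
`Σ_{i,j} (δ_{ij} − ∂ᵢf ∂ⱼf/(1+|Df|²)) ∂ᵢ∂ⱼf`. -/
def mcfRHS (n : ℕ) (f : EuclideanSpace ℝ (Fin n) → ℝ)
    (x : EuclideanSpace ℝ (Fin n)) : ℝ :=
  ∑ i, ∑ j, ((if i = j then (1 : ℝ) else 0)
    - pd n f i x * pd n f j x / (1 + gradSq n f x)) * pd2 n f i j x

/-- `u : ℝⁿ × S → ℝ` (curried, space then time) solves the graphical mean
curvature flow on the time set `S`. -/
def IsMCFSolution (n : ℕ) (u : EuclideanSpace ℝ (Fin n) → ℝ → ℝ) (S : Set ℝ) : Prop :=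
  ∀ x, ∀ t ∈ S, deriv (fun s => u x s) t = mcfRHS n (fun y => u y t) x


section AuxMCF
open Topology RealInnerProductSpace

/-- 1-D second-derivative test at a global minimum. -/
lemma minTest {φ ψ : ℝ → ℝ} {q : ℝ} (hφ : ∀ s, HasDerivAt φ (ψ s) s)
    (hψ : HasDerivAt ψ q 0) (hmin : ∀ s, φ 0 ≤ φ s) : 0 ≤ q := by
  by_contra hq
  push_neg at hq
  have hψ0 : ψ 0 = 0 := by
    have hloc : IsLocalMin φ 0 := Filter.Eventually.of_forall hmin
    exact hloc.hasDerivAt_eq_zero (hφ 0)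
  have hslope : Tendsto (slope ψ 0) (𝓝[≠] (0:ℝ)) (𝓝 q) :=
    hasDerivAt_iff_tendsto_slope.1 hψ
  have hev : ∀ᶠ s in 𝓝[>] (0:ℝ), slope ψ 0 s < 0 := by
    have h1 : ∀ᶠ s in 𝓝[≠] (0:ℝ), slope ψ 0 s < 0 :=
      hslope.eventually_lt_const hq
    have hle : 𝓝[>] (0:ℝ) ≤ 𝓝[≠] (0:ℝ) :=
      nhdsWithin_mono (0:ℝ) (fun x hx => ne_of_gt hx)
    exact h1.filter_mono hle
  obtain ⟨ε, hε, hIoo⟩ := (mem_nhdsGT_iff_exists_Ioo_subset).1 hev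
  have hε' : (0:ℝ) < ε := hε
  have hneg : ∀ s ∈ Ioo (0:ℝ) ε, ψ s < 0 := by
    intro s hs
    have := hIoo hs
    simp only [mem_setOf_eq, slope_def_field, hψ0] at this
    have hs0 : (0:ℝ) < s := hs.1
    rw [div_neg_iff] at this
    rcases this with ⟨h1, h2⟩ | ⟨h1, h2⟩
    · simp at h2; nlinarith [hs.1]
    · simpa using h1
  have hanti : StrictAntiOn φ (Icc 0 (ε/2)) := by
    apply strictAntiOn_of_deriv_neg (convex_Icc _ _)
    · exact fun x _ => (hφ x).differentiableAt.continuousAt.continuousWithinAt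
    · intro x hx
      rw [interior_Icc] at hx
      rw [(hφ x).deriv]
      exact hneg x ⟨hx.1, lt_of_lt_of_le hx.2 (by linarith)⟩
  have hlt := hanti (left_mem_Icc.2 (by linarith)) (right_mem_Icc.2 (by linarith)) (by linarith)
  exact absurd (hmin (ε/2)) (not_le.2 hlt)

lemma traceIneq (N : ℕ) (p : Fin N → ℝ) (S : Fin N → Fin N → ℝ)
    (key : ∀ i j, ∀ a b : ℝ, 0 ≤ a^2 * S i i + a*b*(S i j + S j i) + b^2 * S j j) :
    (∑ i, ∑ j, p i * p j * S i j) ≤ (∑ i, p i ^ 2) * (∑ i, S i i) := by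
  have hSd : ∀ i, 0 ≤ S i i := fun i => by have := key i i 1 0; simpa using this
  have habs : ∀ i j, |S i j + S j i| ≤ 2 * (Real.sqrt (S i i) * Real.sqrt (S j j)) := by
    intro i j
    have hd : discrim (S i i) (S i j + S j i) (S j j) ≤ 0 :=
      discrim_le_zero (fun x => by have := key i j x 1; nlinarith)
    rw [discrim] at hd
    have h4 : (S i j + S j i)^2 ≤ 4 * (S i i * S j j) := by nlinarith
    have h5 : |S i j + S j i| = Real.sqrt ((S i j + S j i)^2) := (Real.sqrt_sq_eq_abs _).symm
    rw [h5]
    have h6 : Real.sqrt (4 * (S i i * S j j))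
        = 2 * (Real.sqrt (S i i) * Real.sqrt (S j j)) := by
      rw [Real.sqrt_mul (by norm_num : (0:ℝ) ≤ 4), Real.sqrt_mul (hSd i),
        show Real.sqrt 4 = 2 from by
          rw [show (4:ℝ) = 2^2 by norm_num, Real.sqrt_sq (by norm_num : (0:ℝ) ≤ 2)]]
    rw [← h6]
    exact Real.sqrt_le_sqrt h4
  set f : Fin N → ℝ := fun i => |p i| * Real.sqrt (S i i) with hf
  have hsym : (∑ i, ∑ j, p i * p j * S j i) = ∑ i, ∑ j, p i * p j * S i j := by
    rw [Finset.sum_comm]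
    exact Finset.sum_congr rfl fun i _ => Finset.sum_congr rfl fun j _ => by ring
  have hstepB : (∑ i, ∑ j, p i * p j * (S i j + S j i)) ≤ ∑ i, ∑ j, 2 * (f i * f j) := by
    apply Finset.sum_le_sum; intro i _
    apply Finset.sum_le_sum; intro j _
    calc p i * p j * (S i j + S j i) ≤ |p i * p j| * |S i j + S j i| := by
          rw [← abs_mul]; exact le_abs_self _
      _ ≤ |p i * p j| * (2 * (Real.sqrt (S i i) * Real.sqrt (S j j))) := by
          apply mul_le_mul_of_nonneg_left (habs i j) (abs_nonneg _)
      _ = 2 * (f i * f j) := by rw [abs_mul, hf]; ring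
  have hstepC : (∑ i, ∑ j, (f i * f j)) = (∑ i, f i) * (∑ j, f j) :=
    (Finset.sum_mul_sum _ _ _ _).symm
  have hstepD : (∑ i, f i)^2 ≤ (∑ i, p i ^ 2) * (∑ i, S i i) := by
    have := Finset.sum_mul_sq_le_sq_mul_sq Finset.univ (fun i => |p i|)
      (fun i => Real.sqrt (S i i))
    calc (∑ i, f i)^2 ≤ (∑ i, |p i|^2) * (∑ i, Real.sqrt (S i i)^2) := this
      _ = (∑ i, p i ^ 2) * (∑ i, S i i) := by
          congr 1
          · exact Finset.sum_congr rfl fun i _ => sq_abs _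
          · exact Finset.sum_congr rfl fun i _ => Real.sq_sqrt (hSd i)
  have hdouble : 2 * (∑ i, ∑ j, p i * p j * S i j)
      = ∑ i, ∑ j, p i * p j * (S i j + S j i) := by
    rw [show (∑ i, ∑ j, p i * p j * (S i j + S j i))
        = (∑ i, ∑ j, p i * p j * S i j) + (∑ i, ∑ j, p i * p j * S j i) from by
      rw [← Finset.sum_add_distrib]
      exact Finset.sum_congr rfl fun i _ => by
        rw [← Finset.sum_add_distrib]
        exact Finset.sum_congr rfl fun j _ => by ring]
    rw [hsym]; ring
  have : 2 * (∑ i, ∑ j, p i * p j * S i j) ≤ 2 * ((∑ i, p i ^ 2) * (∑ i, S i i)) := by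
    rw [hdouble]
    calc (∑ i, ∑ j, p i * p j * (S i j + S j i)) ≤ ∑ i, ∑ j, 2 * (f i * f j) := hstepB
      _ = 2 * ((∑ i, f i) * (∑ j, f j)) := by
          rw [← hstepC, Finset.mul_sum]
          exact Finset.sum_congr rfl fun i _ => by rw [Finset.mul_sum]
      _ ≤ 2 * ((∑ i, p i ^ 2) * (∑ i, S i i)) := by
          have h := hstepD
          rw [sq] at h; linarith
  linarith

lemma secondDirTest (n : ℕ) (f : EuclideanSpace ℝ (Fin n) → ℝ) (hf : ContDiff ℝ (⊤ : ℕ∞) f)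
    (x₀ z : EuclideanSpace ℝ (Fin n)) (c : ℝ)
    (hmin : ∀ y, ‖z - x₀‖^2 + (f z - c)^2 ≤ ‖y - x₀‖^2 + (f y - c)^2)
    (v : EuclideanSpace ℝ (Fin n)) :
    0 ≤ ‖v‖^2 + (fderiv ℝ f z v)^2
      + (f z - c) * (fderiv ℝ (fun y => fderiv ℝ f y v) z v) := by
  have hfd : Differentiable ℝ f := hf.differentiable (by simp)
  set g : EuclideanSpace ℝ (Fin n) → ℝ := fun y => fderiv ℝ f y v with hg
  have hgd : Differentiable ℝ g := by
    have h1 : ContDiff ℝ (⊤ : ℕ∞) (fderiv ℝ f) := hf.fderiv_right (by simp)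
    exact ((ContinuousLinearMap.apply ℝ ℝ v).contDiff.comp h1).differentiable (by simp)
  set ℓ : ℝ → EuclideanSpace ℝ (Fin n) := fun s => z + s • v with hℓ
  have hℓd : ∀ s, HasDerivAt ℓ v s := by
    intro s
    have h1 : HasDerivAt (fun s : ℝ => s • v) ((1:ℝ) • v) s := (hasDerivAt_id s).smul_const v
    rw [one_smul] at h1
    exact h1.const_add z
  have hℓ0 : ℓ 0 = z := by simp [hℓ]
  have hcomp : ∀ s, HasDerivAt (fun s => f (ℓ s)) (fderiv ℝ f (ℓ s) v) s := fun s =>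
    (hfd (ℓ s)).hasFDerivAt.comp_hasDerivAt s (hℓd s)
  have hcompg : ∀ s, HasDerivAt (fun s => g (ℓ s)) (fderiv ℝ g (ℓ s) v) s := fun s =>
    (hgd (ℓ s)).hasFDerivAt.comp_hasDerivAt s (hℓd s)
  set φ : ℝ → ℝ := fun s => ‖ℓ s - x₀‖^2 + (f (ℓ s) - c)^2 with hφdef
  set ψ : ℝ → ℝ := fun s => 2 * ⟪ℓ s - x₀, v⟫ + 2 * ((f (ℓ s) - c) * g (ℓ s)) with hψdef
  have hcurve : ∀ s, HasDerivAt (fun s => ℓ s - x₀) v s := fun s => (hℓd s).sub_const x₀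
  have hφ : ∀ s, HasDerivAt φ (ψ s) s := by
    intro s
    have h1 : HasDerivAt (fun s => ⟪ℓ s - x₀, ℓ s - x₀⟫)
        (⟪ℓ s - x₀, v⟫ + ⟪v, ℓ s - x₀⟫) s := HasDerivAt.inner ℝ (hcurve s) (hcurve s)
    have h1' : HasDerivAt (fun s => ‖ℓ s - x₀‖^2) (2 * ⟪ℓ s - x₀, v⟫) s := by
      simp only [← real_inner_self_eq_norm_sq]
      have : ⟪ℓ s - x₀, v⟫ + ⟪v, ℓ s - x₀⟫ = 2 * ⟪ℓ s - x₀, v⟫ := by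
        rw [real_inner_comm v]; ring
      rw [← this]
      exact h1
    have h2 : HasDerivAt (fun s => (f (ℓ s) - c)^2)
        (2 * ((f (ℓ s) - c) * (fderiv ℝ f (ℓ s) v))) s := by
      have := ((hcomp s).sub_const c).fun_pow 2
      refine this.congr_deriv ?_
      simp; ring
    exact h1'.add h2
  have hψq : HasDerivAt ψ
      (2 * ‖v‖^2 + 2 * ((fderiv ℝ f z v) * g z + (f z - c) * (fderiv ℝ g z v))) 0 := by
    have hA : HasDerivAt (fun s => 2 * ⟪ℓ s - x₀, v⟫) (2 * ‖v‖^2) 0 := by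
      have h1 : HasDerivAt (fun s => ⟪ℓ s - x₀, v⟫) (⟪ℓ 0 - x₀, (0:EuclideanSpace ℝ (Fin n))⟫ + ⟪v, v⟫) 0 :=
        HasDerivAt.inner ℝ (hcurve 0) (hasDerivAt_const 0 v)
      simp only [inner_zero_right, zero_add, real_inner_self_eq_norm_sq] at h1
      exact h1.const_mul 2
    have hB : HasDerivAt (fun s => 2 * ((f (ℓ s) - c) * g (ℓ s)))
        (2 * ((fderiv ℝ f z v) * g z + (f z - c) * (fderiv ℝ g z v))) 0 := by
      have h2 : HasDerivAt (fun s => (f (ℓ s) - c) * g (ℓ s))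
          ((fderiv ℝ f (ℓ 0) v) * g (ℓ 0) + (f (ℓ 0) - c) * (fderiv ℝ g (ℓ 0) v)) 0 :=
        ((hcomp 0).sub_const c).mul (hcompg 0)
      rw [hℓ0] at h2
      exact h2.const_mul 2
    exact hA.add hB
  have hminφ : ∀ s, φ 0 ≤ φ s := by
    intro s
    have := hmin (ℓ s)
    simpa [hφdef, hℓ0] using this
  have hq := minTest hφ hψq hminφ
  have hgx : g z = fderiv ℝ f z v := rfl
  nlinarith [hq]

lemma traceNonneg (N : ℕ) (S : Fin N → Fin N → ℝ)
    (key : ∀ i j, ∀ a b : ℝ, 0 ≤ a^2 * S i i + a*b*(S i j + S j i) + b^2 * S j j) :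
    0 ≤ ∑ i, S i i := by
  apply Finset.sum_nonneg
  intro i _
  have := key i i 1 0; simpa using this

lemma keyContact (n : ℕ) (f : EuclideanSpace ℝ (Fin n) → ℝ) (hf : ContDiff ℝ (⊤ : ℕ∞) f)
    (x₀ z : EuclideanSpace ℝ (Fin n)) (c : ℝ)
    (hmin : ∀ y, ‖z - x₀‖^2 + (f z - c)^2 ≤ ‖y - x₀‖^2 + (f y - c)^2) :
    -(n:ℝ) ≤ (f z - c) * mcfRHS n f z := by
  have hfd : Differentiable ℝ f := hf.differentiable (by simp)
  set w : ℝ := f z - c with hw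
  set e : Fin n → EuclideanSpace ℝ (Fin n) := fun i => EuclideanSpace.single i (1:ℝ) with he
  set p : Fin n → ℝ := fun i => pd n f i z with hp
  set Bm : Fin n → Fin n → ℝ := fun i j => pd2 n f i j z with hBm
  set S : Fin n → Fin n → ℝ :=
    fun i j => (if i = j then (1:ℝ) else 0) + p i * p j + w * Bm i j with hS
  set Q : ℝ := 1 + ∑ i, p i ^ 2 with hQ
  have hQpos : 0 < Q := by
    rw [hQ]
    have : (0:ℝ) ≤ ∑ i, p i ^ 2 := Finset.sum_nonneg fun i _ => sq_nonneg _
    linarith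
  have hg1 : ∀ k, Differentiable ℝ (fun y => fderiv ℝ f y (e k)) := by
    intro k
    have h1 : ContDiff ℝ (⊤ : ℕ∞) (fderiv ℝ f) := hf.fderiv_right (by simp)
    exact ((ContinuousLinearMap.apply ℝ ℝ (e k)).contDiff.comp h1).differentiable (by simp)
  have hBmd : ∀ k l, fderiv ℝ (fun y => fderiv ℝ f y (e l)) z (e k) = Bm k l := fun k l => rfl
  have hpd : ∀ k, fderiv ℝ f z (e k) = p k := fun k => rfl
  -- the positivity of the quadratic form S
  have key : ∀ i j, ∀ a b : ℝ, 0 ≤ a^2 * S i i + a*b*(S i j + S j i) + b^2 * S j j := by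
    intro i j a b
    have h := secondDirTest n f hf x₀ z c hmin (a • e i + b • e j)
    have hnorm : ‖a • e i + b • e j‖^2
        = a^2 + b^2 + 2*a*b*(if i = j then (1:ℝ) else 0) := by
      rw [norm_add_sq_real]
      have h1 : ‖a • e i‖ = |a| := by simp [he, norm_smul]
      have h2 : ‖b • e j‖ = |b| := by simp [he, norm_smul]
      have h3 : ⟪a • e i, b • e j⟫ = a * b * (if i = j then (1:ℝ) else 0) := by
        rw [real_inner_smul_left, real_inner_smul_right]
        rw [he]
        simp only [EuclideanSpace.inner_single_left, starRingEnd_apply, star_one, one_mul,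
          EuclideanSpace.single_apply]
        by_cases hij : i = j
        · subst hij; simp only [if_pos rfl]; ring
        · simp only [if_neg hij, if_neg (Ne.symm hij)]; ring
      rw [h1, h2, h3, sq_abs, sq_abs]
      ring
    have hDfv : fderiv ℝ f z (a • e i + b • e j) = a * p i + b * p j := by
      rw [map_add, map_smul, map_smul, hpd, hpd]
      simp [smul_eq_mul]
    have hfun : (fun y => fderiv ℝ f y (a • e i + b • e j))
        = fun y => a * fderiv ℝ f y (e i) + b * fderiv ℝ f y (e j) := by
      funext y
      rw [map_add, map_smul, map_smul]
      simp [smul_eq_mul]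
    have hD : fderiv ℝ (fun y => fderiv ℝ f y (a • e i + b • e j)) z (a • e i + b • e j)
        = a^2 * Bm i i + a*b*(Bm i j + Bm j i) + b^2 * Bm j j := by
      rw [hfun]
      rw [fderiv_fun_add (((hg1 i) z).const_mul a) (((hg1 j) z).const_mul b)]
      rw [fderiv_const_mul ((hg1 i) z) a, fderiv_const_mul ((hg1 j) z) b]
      rw [ContinuousLinearMap.add_apply, ContinuousLinearMap.smul_apply,
        ContinuousLinearMap.smul_apply]
      rw [map_add, map_add, map_smul, map_smul, map_smul, map_smul]
      rw [hBmd, hBmd, hBmd, hBmd]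
      simp [smul_eq_mul]
      ring
    rw [hnorm, hDfv, hD] at h
    calc (0:ℝ) ≤ a^2 + b^2 + 2*a*b*(if i = j then (1:ℝ) else 0) + (a * p i + b * p j)^2
        + (f z - c) * (a^2 * Bm i i + a*b*(Bm i j + Bm j i) + b^2 * Bm j j) := h
      _ = a^2 * S i i + a*b*(S i j + S j i) + b^2 * S j j := by
        simp only [hS, ← hw]
        by_cases hij : i = j
        · subst hij; simp; ring
        · simp [hij, Ne.symm hij]; ring
  -- helper sum lemmas
  have sum2_sub : ∀ X Y : Fin n → Fin n → ℝ,
      (∑ i, ∑ j, (X i j - Y i j)) = (∑ i, ∑ j, X i j) - (∑ i, ∑ j, Y i j) := by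
    intro X Y
    rw [← Finset.sum_sub_distrib]
    exact Finset.sum_congr rfl fun i _ => Finset.sum_sub_distrib _ _
  have sum2_add : ∀ X Y : Fin n → Fin n → ℝ,
      (∑ i, ∑ j, (X i j + Y i j)) = (∑ i, ∑ j, X i j) + (∑ i, ∑ j, Y i j) := by
    intro X Y
    rw [← Finset.sum_add_distrib]
    exact Finset.sum_congr rfl fun i _ => Finset.sum_add_distrib
  have deltaSum : ∀ (i : Fin n) (X : Fin n → ℝ),
      (∑ j, (if i = j then (1:ℝ) else 0) * X j) = X i := by
    intro i X
    rw [Finset.sum_eq_single i]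
    · simp
    · intro j _ hji
      rw [if_neg (fun h => hji h.symm), zero_mul]
    · intro h; exact absurd (Finset.mem_univ i) h
  set A : Fin n → Fin n → ℝ := fun i j => (if i = j then (1:ℝ) else 0) - p i * p j / Q with hA
  set P2 : ℝ := ∑ i, p i ^ 2 with hP2
  -- the first sum : trace minus quadratic term, nonnegative
  have hT1 : 0 ≤ (∑ i, ∑ j, A i j * S i j) := by
    have h1 : (∑ i, ∑ j, A i j * S i j)
        = (∑ i, ∑ j, (if i = j then (1:ℝ) else 0) * S i j)
          - (∑ i, ∑ j, p i * p j * S i j) / Q := by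
      calc (∑ i, ∑ j, A i j * S i j)
          = ∑ i, ∑ j, ((if i = j then (1:ℝ) else 0) * S i j - (p i * p j * S i j)/Q) :=
            Finset.sum_congr rfl fun i _ => Finset.sum_congr rfl fun j _ => by rw [hA]; ring
        _ = (∑ i, ∑ j, (if i = j then (1:ℝ) else 0) * S i j)
            - (∑ i, ∑ j, (p i * p j * S i j)/Q) := sum2_sub _ _
        _ = (∑ i, ∑ j, (if i = j then (1:ℝ) else 0) * S i j)
            - (∑ i, ∑ j, p i * p j * S i j) / Q := by
            rw [Finset.sum_div]
            congr 1
            exact Finset.sum_congr rfl fun i _ => (Finset.sum_div _ _ _).symm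
    have htr : (∑ i, ∑ j, (if i = j then (1:ℝ) else 0) * S i j) = ∑ i, S i i :=
      Finset.sum_congr rfl fun i _ => deltaSum i (S i)
    have htS : 0 ≤ ∑ i, S i i := traceNonneg n S key
    have hq : (∑ i, ∑ j, p i * p j * S i j) ≤ P2 * (∑ i, S i i) := by
      have := traceIneq n p S key
      rw [hP2]; linarith
    rw [h1, htr, sub_nonneg, div_le_iff₀ hQpos]
    nlinarith [htS, hq]
  -- the second sum equals n
  have hT2 : (∑ i, ∑ j, A i j * ((if i = j then (1:ℝ) else 0) + p i * p j)) = (n:ℝ) := by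
    have h2 : (∑ i, ∑ j, A i j * ((if i = j then (1:ℝ) else 0) + p i * p j))
        = (∑ i, ∑ j, ((if i = j then (1:ℝ) else 0) * (1 + p i * p j)
            - ((if i = j then (1:ℝ) else 0) * (p i * p j) + p i^2 * p j^2)/Q)) := by
      refine Finset.sum_congr rfl fun i _ => Finset.sum_congr rfl fun j _ => ?_
      rw [hA]
      by_cases hij : i = j
      · subst hij; simp; ring
      · simp [hij]; ring
    rw [h2, sum2_sub]
    have h3 : (∑ i, ∑ j, (if i = j then (1:ℝ) else 0) * (1 + p i * p j))
        = (n:ℝ) + P2 := by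
      have : ∀ i : Fin n, (∑ j, (if i = j then (1:ℝ) else 0) * (1 + p i * p j))
          = 1 + p i ^ 2 := by
        intro i
        rw [deltaSum i (fun j => 1 + p i * p j)]
        ring
      rw [Finset.sum_congr rfl fun i _ => this i, Finset.sum_add_distrib]
      simp [hP2]
    have h4 : (∑ i, ∑ j, ((if i = j then (1:ℝ) else 0) * (p i * p j) + p i^2 * p j^2)/Q)
        = (P2 + P2 * P2)/Q := by
      have hinner : ∀ i : Fin n,
          (∑ j, ((if i = j then (1:ℝ) else 0) * (p i * p j) + p i^2 * p j^2)/Q)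
          = (p i ^ 2 + p i ^ 2 * P2)/Q := by
        intro i
        rw [← Finset.sum_div]
        congr 1
        rw [Finset.sum_add_distrib, deltaSum i (fun j => p i * p j)]
        rw [← Finset.mul_sum, ← hP2]
        ring
      rw [Finset.sum_congr rfl fun i _ => hinner i, ← Finset.sum_div]
      congr 1
      rw [Finset.sum_add_distrib, ← hP2, ← Finset.sum_mul, ← hP2]
    rw [h3, h4, hQ]
    have hQ0 : (1:ℝ) + P2 ≠ 0 := by rw [← hQ]; exact hQpos.ne'
    field_simp
    ring
  -- the main identity
  have hmcf : mcfRHS n f z = ∑ i, ∑ j, A i j * Bm i j := by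
    rw [hA]; rfl
  have hident : w * mcfRHS n f z = (∑ i, ∑ j, A i j * S i j) - (n:ℝ) := by
    rw [hmcf, Finset.mul_sum]
    rw [show (∑ i, w * ∑ j, A i j * Bm i j) = ∑ i, ∑ j, w * (A i j * Bm i j) from
      Finset.sum_congr rfl fun i _ => Finset.mul_sum _ _ _]
    rw [show (∑ i, ∑ j, w * (A i j * Bm i j))
        = ∑ i, ∑ j, (A i j * S i j - A i j * ((if i = j then (1:ℝ) else 0) + p i * p j)) from
      Finset.sum_congr rfl fun i _ => Finset.sum_congr rfl fun j _ => by
        simp only [hS]; ring]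
    rw [sum2_sub, hT2]
  rw [hident]
  linarith [hT1]


end AuxMCF

open Topology

set_option maxHeartbeats 1000000

/-- **Lemma 4.1 (global lower bound).** If `u₀ ≥ C` on all of `ℝⁿ`, then the
solution satisfies `u(·,t) ≥ C` for every `t ∈ (0,T)`. -/
theorem mcf_global_lower_bound (n : ℕ) (T : ℝ) (hT : 0 < T)
    (u : EuclideanSpace ℝ (Fin n) → ℝ → ℝ) (u₀ : EuclideanSpace ℝ (Fin n) → ℝ)
    (hcont : ContinuousOn (fun p : EuclideanSpace ℝ (Fin n) × ℝ => u p.1 p.2)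
      (Set.univ ×ˢ Set.Ico 0 T))
    (hsmooth : ContDiffOn ℝ (⊤ : ℕ∞) (fun p : EuclideanSpace ℝ (Fin n) × ℝ => u p.1 p.2)
      (Set.univ ×ˢ Set.Ioo 0 T))
    (hflow : IsMCFSolution n u (Set.Ioo 0 T))
    (hinit : ∀ x, u x 0 = u₀ x)
    (C : ℝ) (hlower : ∀ x, C ≤ u₀ x) :
    ∀ x, ∀ t ∈ Set.Ioo 0 T, C ≤ u x t := by
  intro x₀ t₀ ht₀
  obtain ⟨ht₀0, ht₀T⟩ := ht₀
  have hsub : Icc (0:ℝ) t₀ ⊆ Ico 0 T := fun t ht => ⟨ht.1, lt_of_le_of_lt ht.2 ht₀T⟩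
  have main : ∀ ε > 0, C - ε ≤ u x₀ t₀ := by
    intro ε hε
    set K0 : ℝ := 2*((n:ℝ)+2) with hK0
    have hK0pos : 0 < K0 := by positivity
    have hK0t : 0 ≤ K0 * t₀ := by positivity
    obtain ⟨R, hR1, hRsq, hRep⟩ : ∃ R : ℝ, 1 ≤ R ∧ K0 * t₀ < R^2 ∧ K0 * t₀ / R ≤ ε/2 := by
      refine ⟨max (max 1 (Real.sqrt (K0*t₀) + 1)) (2*K0*t₀/ε), ?_, ?_, ?_⟩
      · exact le_trans (le_max_left 1 _) (le_max_left _ _)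
      · have hs : Real.sqrt (K0*t₀) ^ 2 = K0*t₀ := Real.sq_sqrt hK0t
        have hsn : 0 ≤ Real.sqrt (K0*t₀) := Real.sqrt_nonneg _
        have hRge : Real.sqrt (K0*t₀) + 1 ≤ max (max 1 (Real.sqrt (K0*t₀) + 1)) (2*K0*t₀/ε) :=
          le_trans (le_max_right 1 _) (le_max_left _ _)
        nlinarith
      · set R := max (max 1 (Real.sqrt (K0*t₀) + 1)) (2*K0*t₀/ε) with hR
        have hRpos : (0:ℝ) < R :=
          lt_of_lt_of_le one_pos (le_trans (le_max_left 1 _) (le_max_left _ _))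
        have h2 : 2*K0*t₀/ε ≤ R := le_max_right _ _
        rw [div_le_iff₀ hRpos]
        rw [div_le_iff₀ hε] at h2
        nlinarith
    have hRpos : (0:ℝ) < R := lt_of_lt_of_le one_pos hR1
    set c : ℝ := C - R - ε/2 with hc
    set G : EuclideanSpace ℝ (Fin n) → ℝ → ℝ :=
      fun x t => ‖x - x₀‖^2 + (u x t - c)^2 - (R^2 - K0*t) with hG
    -- ball membership from negativity
    have hball : ∀ x t, 0 ≤ t → G x t ≤ 0 → x ∈ Metric.closedBall x₀ R := by
      intro x t ht0 hneg
      have h2 : ‖x - x₀‖^2 ≤ R^2 := by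
        have := sq_nonneg (u x t - c)
        simp only [hG] at hneg
        nlinarith
      have := Real.sqrt_le_sqrt h2
      rw [Real.sqrt_sq (norm_nonneg _), Real.sqrt_sq (le_of_lt hRpos)] at this
      rwa [Metric.mem_closedBall, dist_eq_norm]
    -- initial positivity
    have hG0 : ∀ x, 0 < G x 0 := by
      intro x
      have h1 := hlower x
      have h2 := hinit x
      simp only [hG]
      have h3 : R + ε/2 ≤ u x 0 - c := by rw [hc, h2]; linarith
      have h4 : (R + ε/2)^2 ≤ (u x 0 - c)^2 :=
        mul_self_le_mul_self (by linarith) h3 |>.trans_eq (sq (u x 0 - c)).symm |>.trans_eq' (sq (R + ε/2)).symm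
      have h5 : 0 ≤ ‖x - x₀‖^2 := sq_nonneg _
      have h6 : 0 < R * ε := mul_pos hRpos hε
      set s0 : ℝ := ‖x - x₀‖^2
      set d0 : ℝ := u x 0 - c
      clear_value s0 d0
      nlinarith [h4, h5, h6]
    -- the key positivity statement
    have hpos : ∀ t ∈ Icc 0 t₀, ∀ x, 0 < G x t := by
      by_contra hcon
      push_neg at hcon
      obtain ⟨t₁, ht₁, x₁, hx₁⟩ := hcon
      -- the compact "bad" set
      set Sset : Set (EuclideanSpace ℝ (Fin n) × ℝ) :=
        (Metric.closedBall x₀ R ×ˢ Icc 0 t₀) ∩ {pr | G pr.1 pr.2 ≤ 0} with hSset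
      have hGcont : ContinuousOn (fun pr : EuclideanSpace ℝ (Fin n) × ℝ => G pr.1 pr.2)
          (univ ×ˢ Icc (0:ℝ) t₀) := by
        have h1 : ContinuousOn (fun pr : EuclideanSpace ℝ (Fin n) × ℝ => u pr.1 pr.2)
            (univ ×ˢ Icc (0:ℝ) t₀) := hcont.mono (prod_mono Subset.rfl hsub)
        simp only [hG]
        apply ContinuousOn.sub
        · apply ContinuousOn.add
          · exact (((continuous_fst.sub continuous_const).norm.pow 2)).continuousOn
          · exact (h1.sub continuousOn_const).pow 2
        · exact (continuous_const.sub (continuous_const.mul continuous_snd)).continuousOn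
      have hSclosed : IsClosed Sset := by
        have h : IsClosed ((Metric.closedBall x₀ R ×ˢ Icc (0:ℝ) t₀) ∩
            ((fun pr : EuclideanSpace ℝ (Fin n) × ℝ => G pr.1 pr.2) ⁻¹' (Iic 0))) :=
          ContinuousOn.preimage_isClosed_of_isClosed
            (hGcont.mono (prod_mono (subset_univ _) Subset.rfl))
            ((Metric.isClosed_closedBall).prod isClosed_Icc) isClosed_Iic
        exact h
      have hScompact : IsCompact Sset :=
        ((isCompact_closedBall x₀ R).prod isCompact_Icc).of_isClosed_subset hSclosed
          inter_subset_left
      have hSne : Sset.Nonempty :=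
        ⟨(x₁, t₁), ⟨⟨hball x₁ t₁ ht₁.1 hx₁, ht₁⟩, hx₁⟩⟩
      set Bad : Set ℝ := Prod.snd '' Sset with hBad
      have hBadcompact : IsCompact Bad := hScompact.image continuous_snd
      have hBadne : Bad.Nonempty := hSne.image _
      set th : ℝ := sInf Bad with hth
      have hthBad : th ∈ Bad := hBadcompact.sInf_mem hBadne
      obtain ⟨⟨x', t'⟩, hS', ht'⟩ := hthBad
      simp only at ht'
      obtain ⟨⟨hx'ball, ht'Icc⟩, hx'G⟩ := hS'
      subst ht'
      simp only [mem_setOf_eq] at hx'ball ht'Icc hx'G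
      have hth0 : 0 < th := by
        rcases lt_or_eq_of_le ht'Icc.1 with h | h
        · exact h
        · exfalso; rw [← h] at hx'G; exact absurd hx'G (not_le.2 (hG0 x'))
      have hthT : th < T := lt_of_le_of_lt ht'Icc.2 ht₀T
      have hbefore : ∀ t, 0 ≤ t → t < th → ∀ x, 0 < G x t := by
        intro t ht0 htlt x
        by_contra hcon2
        push_neg at hcon2
        have htIcc : t ∈ Icc 0 t₀ := ⟨ht0, le_trans (le_of_lt htlt) ht'Icc.2⟩
        have hmem : t ∈ Bad := ⟨(x, t), ⟨⟨hball x t ht0 hcon2, htIcc⟩, hcon2⟩, rfl⟩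
        have hle := csInf_le hBadcompact.bddBelow hmem
        rw [← hth] at hle
        linarith
      have hfC : ContDiff ℝ (⊤ : ℕ∞) (fun y => u y th) := by
        have hmap : ContDiff ℝ (⊤ : ℕ∞) (fun y : EuclideanSpace ℝ (Fin n) => (y, th)) :=
          contDiff_id.prodMk contDiff_const
        have h2 : ContDiffOn ℝ (⊤ : ℕ∞) (fun y => u y th) univ := by
          have h3 := ContDiffOn.comp (s := univ) hsmooth hmap.contDiffOn
            (fun y _ => ⟨mem_univ _, hth0, hthT⟩)
          exact h3
        exact contDiffOn_univ.mp h2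
      have hGthcont : Continuous (fun x => G x th) := by
        simp only [hG]
        exact (((continuous_id.sub continuous_const).norm.pow 2)).add
          ((hfC.continuous.sub continuous_const).pow 2) |>.sub continuous_const
      obtain ⟨z, hzball, hzmin⟩ := (isCompact_closedBall x₀ R).exists_isMinOn
        ⟨x', hx'ball⟩ hGthcont.continuousOn
      rw [isMinOn_iff] at hzmin
      have hzle : G z th ≤ 0 := le_trans (hzmin x' hx'ball) hx'G
      have hglobal : ∀ y, G z th ≤ G y th := by
        intro y
        by_cases hy : y ∈ Metric.closedBall x₀ R
        · exact hzmin y hy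
        · have h1 : R < ‖y - x₀‖ := by
            rw [Metric.mem_closedBall, dist_eq_norm] at hy
            linarith [not_le.1 hy]
          have h2 : R^2 < ‖y - x₀‖^2 := by nlinarith [norm_nonneg (y - x₀)]
          have h3 : 0 ≤ K0 * th := by positivity
          have h4 : 0 < G y th := by
            simp only [hG]; nlinarith [sq_nonneg (u y th - c)]
          linarith
      have hdiff_t : DifferentiableAt ℝ (fun t => u z t) th := by
        have hopen : IsOpen ((univ : Set (EuclideanSpace ℝ (Fin n))) ×ˢ Ioo (0:ℝ) T) :=
          isOpen_univ.prod isOpen_Ioo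
        have hat : ContDiffAt ℝ (⊤ : ℕ∞) (fun p : EuclideanSpace ℝ (Fin n) × ℝ => u p.1 p.2)
            (z, th) := hsmooth.contDiffAt (hopen.mem_nhds ⟨mem_univ _, hth0, hthT⟩)
        have h5 : DifferentiableAt ℝ (fun p : EuclideanSpace ℝ (Fin n) × ℝ => u p.1 p.2)
            (z, th) := hat.differentiableAt (by simp)
        exact h5.comp th ((differentiableAt_const z).prodMk differentiableAt_id)
      set ut : ℝ := deriv (fun s => u z s) th with hut_def
      have hut : HasDerivAt (fun s => u z s) ut th := hdiff_t.hasDerivAt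
      have hgd : HasDerivAt (fun t => G z t) (2*(u z th - c)*ut + K0) th := by
        have h1 : HasDerivAt (fun t => (u z t - c)^2)
            ((2:ℕ) * (u z th - c)^(2-1) * ut) th := (hut.sub_const c).pow 2
        have h2 : HasDerivAt (fun t : ℝ => K0 * t) (K0 * 1) th :=
          (hasDerivAt_id th).const_mul K0
        have h3 : HasDerivAt (fun t : ℝ => R^2 - K0*t) (-(K0*1)) th := h2.const_sub (R^2)
        have h4 := (h1.const_add (‖z - x₀‖^2)).fun_sub h3
        simp only [hG]
        refine h4.congr_deriv ?_
        push_cast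
        ring
      have hslope : 2*(u z th - c)*ut + K0 ≤ 0 := by
        have htend : Tendsto (slope (fun t => G z t) th) (𝓝[≠] th)
            (𝓝 (2*(u z th - c)*ut + K0)) := hasDerivAt_iff_tendsto_slope.1 hgd
        have htend' : Tendsto (slope (fun t => G z t) th) (𝓝[<] th)
            (𝓝 (2*(u z th - c)*ut + K0)) :=
          htend.mono_left (nhdsWithin_mono th (fun x hx => ne_of_lt hx))
        refine le_of_tendsto htend' ?_
        filter_upwards [Ioo_mem_nhdsLT_of_mem (⟨hth0, le_refl th⟩ : th ∈ Ioc 0 th)] with t ht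
        rw [slope_def_field]
        apply div_nonpos_of_nonneg_of_nonpos
        · have := hbefore t (le_of_lt ht.1) ht.2 z
          linarith
        · linarith [ht.2]
      have hpde : ut = mcfRHS n (fun y => u y th) z := hflow z th ⟨hth0, hthT⟩
      have hmin' : ∀ y, ‖z - x₀‖^2 + (u z th - c)^2 ≤ ‖y - x₀‖^2 + (u y th - c)^2 := by
        intro y
        have := hglobal y
        simp only [hG] at this
        linarith
      have hkc : -(n:ℝ) ≤ (u z th - c) * mcfRHS n (fun y => u y th) z :=
        keyContact n (fun y => u y th) hfC x₀ z c hmin'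
      rw [← hpde] at hkc
      rw [hK0] at hslope
      linarith
    -- conclude along the segment {x₀} × [0,t₀]
    have hcont0 : ContinuousOn (fun t => u x₀ t) (Icc 0 t₀) := by
      have hmap : Continuous (fun t : ℝ => (x₀, t)) := continuous_const.prodMk continuous_id
      exact (hcont.mono (prod_mono Subset.rfl hsub)).comp hmap.continuousOn
        (fun t ht => ⟨mem_univ _, ht⟩)
    have hne0 : ∀ t ∈ Icc 0 t₀, u x₀ t - c ≠ 0 := by
      intro t ht h0
      have hp := hpos t ht x₀
      simp only [hG] at hp
      rw [h0, sub_self x₀, norm_zero] at hp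
      have hKt : K0 * t ≤ K0 * t₀ := mul_le_mul_of_nonneg_left ht.2 (le_of_lt hK0pos)
      nlinarith
    have hstart : 0 < u x₀ 0 - c := by
      rw [hinit x₀, hc]
      have := hlower x₀
      linarith
    have hend : 0 < u x₀ t₀ - c := by
      rcases lt_trichotomy (u x₀ t₀ - c) 0 with h | h | h
      · exfalso
        have hIVT := intermediate_value_Icc' (le_of_lt ht₀0) hcont0
        have hcmem : c ∈ Icc (u x₀ t₀) (u x₀ 0) := ⟨by linarith, by linarith⟩
        obtain ⟨s0, hs0, hs0c⟩ := hIVT hcmem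
        exact hne0 s0 hs0 (sub_eq_zero.mpr (by simpa using hs0c))
      · exact absurd h (hne0 t₀ (right_mem_Icc.2 (le_of_lt ht₀0)))
      · exact h
    have hGt₀ := hpos t₀ (right_mem_Icc.2 (le_of_lt ht₀0)) x₀
    simp only [hG] at hGt₀
    rw [sub_self x₀, norm_zero] at hGt₀
    set d0 : ℝ := u x₀ t₀ - c with hd0
    set m0 : ℝ := K0 * t₀ / R with hm0
    have hm0R : m0 * R = K0 * t₀ := by
      rw [hm0]; field_simp
    have hm0nn : 0 ≤ m0 := div_nonneg hK0t (le_of_lt hRpos)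
    clear_value K0 c G d0 m0
    have hm0lt : m0 < R := by nlinarith
    clear hpos hne0 hcont0 hstart hball hG0 hG hflow hcont hsmooth hinit hlower hsub
    have hd : R - m0 ≤ d0 := by
      by_contra hcon3
      push_neg at hcon3
      have hsq : d0 * d0 < (R - m0) * (R - m0) :=
        mul_self_lt_mul_self (le_of_lt hend) hcon3
      nlinarith [mul_nonneg hm0nn (le_of_lt (sub_pos.2 hm0lt))]
    linarith [hRep, hd]
  have hfin : ∀ ε > 0, C ≤ u x₀ t₀ + ε := fun ε hε => by linarith [main ε hε]
  exact le_of_forall_pos_le_add hfin
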